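/- arXiv:2309.03197 — 2 statements merged into one kernel-verified Lean document; each statement's English description precedes it below -/
import Mathlib

section
/- Let X be the integer-valued random variable supported on {−1, 0, 1, 2, 3} with P(X = −1) = P(X = 3) = 0.1, P(X = 0) = P(X = 2) = 0.2, and P(X = 1) = 0.4. Then X is log-concave on ℤ, but |X| is not log-concave on ℕ; indeed P(|X| = 2)² < P(|X| = 1) · P(|X| = 3). -/
/-!
On `ℤ` the law of `X` is positive exactly on the interval `[-1, 3]`, so log-concavity only
has to be checked at the five points of that interval. Folding the law onto `ℕ` merges the atoms at
`-1` and `1` into `P(|X| = 1) = 0.5`, while `P(|X| = 2) = 0.2` and `P(|X| = 3) = 0.1`, so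
`0.2² < 0.5 · 0.1` breaks log-concavity of `|X|` at `2`.
-/

open MeasureTheory ProbabilityTheory
open scoped ProbabilityTheory

/-- A function `p : ℤ → ℝ` is a log-concave probability mass function if
`p(k)² ≥ p(k-1)·p(k+1)` for all `k ∈ ℤ` and its support is an integer interval. -/
def IsLogConcavePMF (p : ℤ → ℝ) : Prop :=
  (∀ k : ℤ, p (k - 1) * p (k + 1) ≤ p k ^ 2) ∧
  (∀ a b c : ℤ, a ≤ b → b ≤ c → 0 < p a → 0 < p c → 0 < p b)

lemma measureReal_abs_preimage_singleton {Ω : Type*} [MeasurableSpace Ω] (μ : Measure Ω)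
    [IsFiniteMeasure μ] {X : Ω → ℤ} (hX : Measurable X) {k : ℤ} (hk : 0 < k) :
    μ.real ((fun ω => |X ω|) ⁻¹' {k}) = μ.real (X ⁻¹' {-k}) + μ.real (X ⁻¹' {k}) := by
  have hsplit : (fun ω => |X ω|) ⁻¹' {k} = X ⁻¹' {-k} ∪ X ⁻¹' {k} := by
    ext ω
    simp only [Set.mem_preimage, Set.mem_singleton_iff, Set.mem_union, abs_eq hk.le]
    tauto
  have hdisj : Disjoint (X ⁻¹' {-k}) (X ⁻¹' {k}) :=
    Disjoint.preimage X (Set.disjoint_singleton.mpr (by omega))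
  rw [hsplit, measureReal_union hdisj (hX (measurableSet_singleton k))]

lemma isLogConcavePMF_of_pos_on_Icc {p : ℤ → ℝ} {a b : ℤ}
    (hzero : ∀ k ∉ Set.Icc a b, p k = 0) (hpos : ∀ k ∈ Set.Icc a b, 0 < p k)
    (hineq : ∀ k ∈ Set.Icc a b, p (k - 1) * p (k + 1) ≤ p k ^ 2) :
    IsLogConcavePMF p := by
  have hmem : ∀ k, 0 < p k → k ∈ Set.Icc a b := fun k hk =>
    by_contra fun h => hk.ne' (hzero k h)
  refine ⟨fun k => ?_, fun x y z hxy hyz hx hz => hpos y ?_⟩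
  · by_cases hk : k ∈ Set.Icc a b
    · exact hineq k hk
    · rw [Set.mem_Icc, not_and_or, not_le, not_le] at hk
      rcases hk with hlt | hgt
      · rw [hzero (k - 1) (by simp only [Set.mem_Icc]; omega), zero_mul]
        positivity
      · rw [hzero (k + 1) (by simp only [Set.mem_Icc]; omega), mul_zero]
        positivity
  · obtain ⟨hax, -⟩ := hmem x hx
    obtain ⟨-, hzb⟩ := hmem z hz
    exact ⟨hax.trans hxy, hyz.trans hzb⟩

/-- The random variable supported on `{-1,0,1,2,3}` with `P(X=-1)=P(X=3)=0.1`,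
`P(X=0)=P(X=2)=0.2`, `P(X=1)=0.4` is log-concave on `ℤ`, but `|X|` is not
log-concave on `ℕ`; indeed `P(|X|=2)² < P(|X|=1)·P(|X|=3)`. -/
theorem counterexample_abs_not_logConcave
    {Ω : Type*} [MeasureSpace Ω] [IsProbabilityMeasure (ℙ : Measure Ω)]
    (X : Ω → ℤ) (hX : Measurable X)
    (p q : ℤ → ℝ)
    (hp : ∀ k : ℤ, p k = (ℙ (X ⁻¹' {k})).toReal)
    (hq : ∀ k : ℤ, q k = (ℙ ((fun ω => |X ω|) ⁻¹' {k})).toReal)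
    (hm1 : p (-1) = 0.1) (h3 : p 3 = 0.1)
    (h0 : p 0 = 0.2) (h2 : p 2 = 0.2) (h1 : p 1 = 0.4)
    (hrest : ∀ k : ℤ, k ∉ ({-1, 0, 1, 2, 3} : Set ℤ) → p k = 0) :
    IsLogConcavePMF p ∧
    ¬ ((∀ k : ℤ, 1 ≤ k → q (k - 1) * q (k + 1) ≤ q k ^ 2) ∧
       (∀ a b c : ℤ, a ≤ b → b ≤ c → 0 < q a → 0 < q c → 0 < q b)) ∧
    q 2 ^ 2 < q 1 * q 3 := by
  have hzero : ∀ k ∉ Set.Icc (-1 : ℤ) 3, p k = 0 := fun k hk =>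
    hrest k (by simp only [Set.mem_Icc, Set.mem_insert_iff, Set.mem_singleton_iff] at hk ⊢; omega)
  have hfold : ∀ k : ℤ, 0 < k → q k = p (-k) + p k := fun k hk => by
    rw [hq, hp, hp]
    exact measureReal_abs_preimage_singleton ℙ hX hk
  have hq1 : q 1 = 0.5 := by rw [hfold 1 one_pos, hm1, h1]; norm_num
  have hq2 : q 2 = 0.2 := by rw [hfold 2 two_pos, hzero (-2) (by simp), h2]; norm_num
  have hq3 : q 3 = 0.1 := by rw [hfold 3 three_pos, hzero (-3) (by simp), h3]; norm_num
  have hviolation : q 2 ^ 2 < q 1 * q 3 := by rw [hq1, hq2, hq3]; norm_num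
  refine ⟨isLogConcavePMF_of_pos_on_Icc hzero ?_ ?_, fun hlc => ?_, hviolation⟩
  · rintro k ⟨hlo, hhi⟩
    interval_cases k <;> norm_num [hm1, h0, h1, h2, h3]
  · rintro k ⟨hlo, hhi⟩
    interval_cases k <;>
      norm_num [hm1, h0, h1, h2, h3, hzero (-2) (by simp), hzero 4 (by simp)]
  · have := hlc.1 2 one_le_two
    norm_num at this
    linarith
end

section
/- Let μ and ν be centered (mean-zero) log-concave probability measures on ℤ each having first absolute moment at most 1 (i.e., Σ_{k∈ℤ} |k|·μ({k}) ≤ 1 and Σ_{k∈ℤ} |k|·ν({k}) ≤ 1). Then W₁(μ, ν) ≤ 12·d_LP(μ, ν)·log(4e / d_LP(μ, ν)). -/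
/-!
The quantile coupling gives `W₁(μ, ν) ≤ ∑ₖ |F_μ(k) - F_ν(k)|` for the distribution functions.
On `ℤ` a thickening of radius `ε ≤ 1` changes no set, so `d_LP(μ, ν) < ε` gives
`|μ(A) - ν(A)| ≤ ε` for all `A`, which controls the `4N` terms with `-2N ≤ k < 2N`.
For the others, log-concavity passes from the mass function to its tails `T(m) = μ[m, ∞)`,
so `T(n + 2) / T(n) ≤ T(2) / T(0)`. Markov's inequality for `X` and `-X`, with
`E X⁺ = (E|X| + E X) / 2 ≤ 1/2`, gives `T(2) ≤ 1/4` and `T(0) ≥ 1/2`, so the tails halve every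
two steps and contribute at most `8 · 2⁻ᴺ`. With `2⁻ᴺ ≈ ε`, `4Nε + 8ε ≤ 12 ε log(4e/ε)`, and
letting `ε ↓ d_LP` finishes the proof.
-/

open MeasureTheory ProbabilityTheory
open scoped ProbabilityTheory

/-- The 1-Wasserstein distance `W₁(μ,ν) = inf E[|X − Y|]`, the infimum running over
all couplings of `μ` and `ν`. -/
noncomputable def W1 (μ ν : Measure ℤ) : ℝ :=
  (⨅ π ∈ {π : Measure (ℤ × ℤ) | π.map Prod.fst = μ ∧ π.map Prod.snd = ν},
    ∫⁻ x, ENNReal.ofReal |(x.1 : ℝ) - (x.2 : ℝ)| ∂π).toReal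

/-- The Lévy–Prokhorov distance
`d_LP(μ,ν) = inf{ε > 0 : μ(A) ≤ ν(Aᵉ) + ε for all A}`, where `Aᵉ` is the open
`ε`-thickening of `A`. -/
noncomputable def dLP (μ ν : Measure ℤ) : ℝ :=
  sInf {ε : ℝ | 0 < ε ∧
    ∀ A : Set ℤ, μ A ≤ ν (Metric.thickening ε A) + ENNReal.ofReal ε}

open Set Filter Topology
open scoped ENNReal Interval

namespace IsLogConcavePMF

variable {p : ℤ → ℝ}

theorem comp_neg (hp : IsLogConcavePMF p) : IsLogConcavePMF (fun k => p (-k)) := by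
  refine ⟨fun k => ?_, fun a b c hab hbc ha hc => hp.2 (-c) (-b) (-a) (by omega) (by omega) hc ha⟩
  have h := hp.1 (-k)
  rw [show -k - 1 = -(k + 1) by ring, show -k + 1 = -(k - 1) by ring] at h
  linarith [mul_comm (p (-(k + 1))) (p (-(k - 1)))]

theorem pos_of_le_of_le (hp : IsLogConcavePMF p) (h0 : ∀ k, 0 ≤ p k) {a b c : ℤ}
    (hab : a ≤ b) (hbc : b ≤ c) (hac : 0 < p c * p a) : 0 < p b :=
  hp.2 a b c hab hbc (pos_of_mul_pos_right hac (h0 c)) (pos_of_mul_pos_left hac (h0 a))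

/-- The ratio `p (l + 1) / p l` is antitone in `l`, in product form. -/
theorem mul_apply_succ_le (hp : IsLogConcavePMF p) (h0 : ∀ k, 0 ≤ p k) {k l : ℤ} (hkl : k ≤ l) :
    p (l + 1) * p k ≤ p l * p (k + 1) := by
  induction l, hkl using Int.leInduction with
  | base => rw [mul_comm]
  | succ l hkl ih =>
    have hlc : p l * p (l + 1 + 1) ≤ p (l + 1) ^ 2 := by simpa using hp.1 (l + 1)
    rcases (h0 (l + 1)).eq_or_lt with hz | hpos
    · refine le_of_not_gt fun hcon => (hp.pos_of_le_of_le h0 (by omega : k ≤ l + 1)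
        (by omega : l + 1 ≤ l + 1 + 1) ?_).ne' hz.symm
      rwa [← hz, zero_mul] at hcon
    · rcases (h0 l).eq_or_lt with hz | hl
      · have hk : p k = 0 := by
          rw [← hz, zero_mul] at ih
          exact le_antisymm (nonpos_of_mul_nonpos_right ih hpos) (h0 k)
        rw [hk, mul_zero]
        exact mul_nonneg (h0 _) (h0 _)
      · nlinarith [h0 k, h0 (k + 1), h0 (l + 1 + 1), mul_le_mul_of_nonneg_left ih hpos.le]

theorem mul_apply_add_two_le (hp : IsLogConcavePMF p) (h0 : ∀ k, 0 ≤ p k) {k l : ℤ}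
    (hkl : k ≤ l) : p (l + 2) * p k ≤ p l * p (k + 2) := by
  have h1 := hp.mul_apply_succ_le h0 hkl
  have h2 := hp.mul_apply_succ_le h0 (by omega : k + 1 ≤ l + 1)
  rw [show l + 1 + 1 = l + 2 by ring, show k + 1 + 1 = k + 2 by ring] at h2
  by_cases hmid : 0 < p (k + 1) * p (l + 1)
  · refine le_of_mul_le_mul_right ?_ hmid
    nlinarith [mul_le_mul h1 h2 (mul_nonneg (h0 _) (h0 _)) (mul_nonneg (h0 _) (h0 _))]
  · -- a zero strictly inside the support would contradict its being an interval
    have hout : ¬ 0 < p (l + 2) * p k := fun h => hmid <|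
      mul_pos (hp.pos_of_le_of_le h0 (by omega) (by omega) h)
        (hp.pos_of_le_of_le h0 (by omega) (by omega) h)
    exact (not_lt.mp hout).trans (mul_nonneg (h0 _) (h0 _))

end IsLogConcavePMF

noncomputable def upperTail (p : ℤ → ℝ) (m : ℤ) : ℝ := ∑' j : ℕ, p (m + j)

section upperTail

variable {p : ℤ → ℝ}

theorem Summable.comp_add_natCast (hs : Summable p) (m : ℤ) :
    Summable fun j : ℕ => p (m + j) :=
  hs.comp_injective ((add_right_injective m).comp Nat.cast_injective)

theorem upperTail_nonneg (h0 : ∀ k, 0 ≤ p k) (m : ℤ) : 0 ≤ upperTail p m :=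
  tsum_nonneg fun _ => h0 _

theorem upperTail_eq_add (hs : Summable p) (m : ℤ) :
    upperTail p m = p m + upperTail p (m + 1) := by
  rw [upperTail, (hs.comp_add_natCast m).tsum_eq_zero_add, upperTail]
  simp only [Nat.cast_zero, add_zero, Nat.cast_add, Nat.cast_one, add_assoc, add_comm (1 : ℤ)]

theorem antitone_upperTail (h0 : ∀ k, 0 ≤ p k) (hs : Summable p) : Antitone (upperTail p) :=
  antitone_int_of_succ_le fun m => by linarith [upperTail_eq_add hs m, h0 m]

theorem isLogConcavePMF_upperTail (hp : IsLogConcavePMF p) (h0 : ∀ k, 0 ≤ p k)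
    (hs : Summable p) : IsLogConcavePMF (upperTail p) := by
  refine ⟨fun k => ?_, fun a b c _ hbc _ hc => hc.trans_le (antitone_upperTail h0 hs hbc)⟩
  have hshift : upperTail p (k + 1) * p (k - 1) ≤ upperTail p k * p k := by
    simp only [upperTail, ← tsum_mul_right]
    refine (hs.comp_add_natCast _).mul_right _ |>.tsum_le_tsum (fun j => ?_)
      ((hs.comp_add_natCast _).mul_right _)
    have := hp.mul_apply_succ_le h0 (by omega : k - 1 ≤ k + j)
    rwa [sub_add_cancel, add_right_comm] at this
  have e1 := upperTail_eq_add hs (k - 1)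
  have e2 := upperTail_eq_add hs k
  rw [sub_add_cancel] at e1
  rw [e1, sq]
  linear_combination hshift - upperTail p k * e2

end upperTail

theorem exists_pos_and_succ_lt_of_tendsto_zero {u : ℕ → ℝ} (hu : Tendsto u atTop (𝓝 0)) {a : ℕ}
    (ha : 0 < u a) : ∃ m, 0 < u m ∧ u (m + 1) < u m := by
  by_contra! h
  have hmono : ∀ i, u a ≤ u (a + i) := by
    intro i
    induction i with
    | zero => rfl
    | succ i ih => exact ih.trans (h _ (ha.trans_le ih))
  exact ha.not_ge (ge_of_tendsto' (hu.comp (tendsto_add_atTop_nat a))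
    fun i => (hmono i).trans_eq (by rw [Function.comp_apply, add_comm]))

namespace IsLogConcavePMF

variable {p : ℤ → ℝ}

theorem apply_add_le_mul_pow (hp : IsLogConcavePMF p) (h0 : ∀ k, 0 ≤ p k) {m : ℤ}
    (hm : 0 < p m) (j : ℕ) : p (m + j) ≤ p m * (p (m + 1) / p m) ^ j := by
  induction j with
  | zero => simp
  | succ j ih =>
    have h := hp.mul_apply_succ_le h0 (by omega : m ≤ m + j)
    rw [pow_succ, Nat.cast_succ, ← add_assoc, ← mul_assoc]
    calc p (m + j + 1) ≤ p (m + j) * (p (m + 1) / p m) := by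
          rw [mul_div_assoc']; exact (le_div_iff₀ hm).2 h
      _ ≤ _ := by gcongr; exact div_nonneg (h0 _) (h0 _)

theorem summable_natCast_mul (hp : IsLogConcavePMF p) (h0 : ∀ k, 0 ≤ p k) (hs : Summable p) :
    Summable fun n : ℕ => (n : ℝ) * p n := by
  by_cases hzero : ∀ n : ℕ, p n = 0
  · simp [hzero, summable_zero]
  obtain ⟨a, ha⟩ := not_forall.mp hzero
  -- past a point where it strictly decreases, a log-concave sequence decays geometrically
  obtain ⟨m, hm, hdec⟩ := exists_pos_and_succ_lt_of_tendsto_zero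
    (hs.comp_injective Nat.cast_injective).tendsto_atTop_zero (u := fun n : ℕ => p n)
    ((h0 a).lt_of_ne' ha)
  push_cast at hdec
  set ρ := p (m + 1) / p m
  have hρ0 : 0 ≤ ρ := div_nonneg (h0 _) (h0 _)
  have hρ1 : ρ < 1 := (div_lt_one hm).2 hdec
  have hgeom : Summable fun n : ℕ => p m * ((m : ℝ) * ρ ^ n + n ^ 1 * ρ ^ n) :=
    (((summable_geometric_of_lt_one hρ0 hρ1).mul_left _).add
      (summable_pow_mul_geometric_of_norm_lt_one 1 (by rwa [Real.norm_of_nonneg hρ0]))).mul_left _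
  rw [← summable_nat_add_iff m]
  refine hgeom.of_nonneg_of_le (fun n => mul_nonneg (Nat.cast_nonneg _) (h0 _)) fun n => ?_
  have h := hp.apply_add_le_mul_pow h0 hm n
  push_cast
  rw [add_comm (n : ℤ)]
  calc ((n : ℝ) + m) * p (m + n) ≤ (n + m) * (p m * ρ ^ n) := by gcongr
    _ = _ := by ring

end IsLogConcavePMF

structure IsCenteredLogConcavePMF (p : ℤ → ℝ) : Prop where
  nonneg : ∀ k, 0 ≤ p k
  isLogConcavePMF : IsLogConcavePMF p
  hasSum : HasSum p 1
  tsum_mul_eq_zero : ∑' k : ℤ, (k : ℝ) * p k = 0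
  tsum_abs_mul_le_one : ∑' k : ℤ, |(k : ℝ)| * p k ≤ 1

namespace IsCenteredLogConcavePMF

variable {p : ℤ → ℝ}

theorem comp_neg (hp : IsCenteredLogConcavePMF p) : IsCenteredLogConcavePMF fun k => p (-k) where
  nonneg _ := hp.nonneg _
  isLogConcavePMF := hp.isLogConcavePMF.comp_neg
  hasSum := (Equiv.neg ℤ).hasSum_iff.mpr hp.hasSum
  tsum_mul_eq_zero := by
    have h := (Equiv.neg ℤ).tsum_eq fun k : ℤ => (k : ℝ) * p k
    simp only [Equiv.neg_apply, Int.cast_neg, neg_mul, tsum_neg, hp.tsum_mul_eq_zero] at h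
    exact neg_eq_zero.mp h
  tsum_abs_mul_le_one := by
    have h := (Equiv.neg ℤ).tsum_eq fun k : ℤ => |(k : ℝ)| * p k
    simp only [Equiv.neg_apply, Int.cast_neg, abs_neg] at h
    exact h.trans_le hp.tsum_abs_mul_le_one

theorem summable_natCast_mul (hp : IsCenteredLogConcavePMF p) :
    Summable fun n : ℕ => (n : ℝ) * p n :=
  hp.isLogConcavePMF.summable_natCast_mul hp.nonneg hp.hasSum.summable

theorem summable_abs_mul (hp : IsCenteredLogConcavePMF p) :
    Summable fun k : ℤ => |(k : ℝ)| * p k :=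
  .of_nat_of_neg (by simpa using hp.summable_natCast_mul)
    (by simpa using hp.comp_neg.summable_natCast_mul)

/-- Markov's inequality, with `E[X⁺] = (E|X| + E X) / 2 ≤ 1 / 2`. -/
theorem natCast_mul_upperTail_le (hp : IsCenteredLogConcavePMF p) (m : ℕ) :
    (m : ℝ) * upperTail p m ≤ 1 / 2 := by
  have habs := hp.summable_abs_mul
  have hmul : Summable fun k : ℤ => (k : ℝ) * p k :=
    habs.of_norm_bounded fun k => by rw [norm_mul, Real.norm_of_nonneg (hp.nonneg k)]; rfl
  calc (m : ℝ) * upperTail p m = ∑' j : ℕ, (m : ℝ) * p (m + j) := tsum_mul_left.symm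
    _ ≤ ∑' k : ℤ, (|(k : ℝ)| * p k + k * p k) / 2 := by
        refine ((hp.hasSum.summable.comp_add_natCast _).mul_left _).tsum_le_tsum_of_inj
          (fun j : ℕ => (m : ℤ) + j) ((add_right_injective _).comp Nat.cast_injective)
          (fun k _ => ?_) (fun j => ?_) ((habs.add hmul).div_const 2)
        · rw [← add_mul]
          exact div_nonneg (mul_nonneg (by linarith [neg_abs_le (k : ℝ)]) (hp.nonneg k))
            zero_le_two
        · have hk : (0 : ℝ) ≤ ((m : ℤ) + j : ℤ) := by positivity
          rw [abs_of_nonneg hk]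
          push_cast
          nlinarith [hp.nonneg (m + j), (Nat.cast_nonneg j : (0 : ℝ) ≤ j)]
    _ = (∑' k : ℤ, |(k : ℝ)| * p k + ∑' k : ℤ, (k : ℝ) * p k) / 2 := by
        rw [tsum_div_const, habs.tsum_add hmul]
    _ ≤ 1 / 2 := by linarith [hp.tsum_abs_mul_le_one, hp.tsum_mul_eq_zero]

theorem upperTail_zero_add_upperTail_neg (hp : IsCenteredLogConcavePMF p) :
    upperTail p 0 + upperTail (fun k => p (-k)) 1 = 1 := by
  have hs := hp.hasSum.summable
  refine HasSum.unique (HasSum.of_nat_of_neg_add_one ?_ ?_) hp.hasSum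
  · simpa [upperTail] using (hs.comp_add_natCast 0).hasSum
  · simpa [upperTail, add_comm] using (hp.comp_neg.hasSum.summable.comp_add_natCast 1).hasSum

theorem half_le_upperTail_zero (hp : IsCenteredLogConcavePMF p) : 1 / 2 ≤ upperTail p 0 := by
  have h := hp.comp_neg.natCast_mul_upperTail_le 1
  push_cast at h
  linarith [hp.upperTail_zero_add_upperTail_neg]

theorem upperTail_add_two_le (hp : IsCenteredLogConcavePMF p) (n : ℕ) :
    upperTail p (n + 2) ≤ upperTail p n / 2 := by
  have hT0 := upperTail_nonneg hp.nonneg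
  have h := (isLogConcavePMF_upperTail hp.isLogConcavePMF hp.nonneg hp.hasSum.summable
    ).mul_apply_add_two_le hT0 (Nat.cast_nonneg n : (0 : ℤ) ≤ n)
  have h2 := hp.natCast_mul_upperTail_le 2
  have h0 := hp.half_le_upperTail_zero
  push_cast at h h2
  refine le_of_mul_le_mul_right ?_ (by linarith : 0 < upperTail p 0)
  nlinarith [hT0 n]

end IsCenteredLogConcavePMF

theorem le_div_two_pow_of_le_half {a : ℕ → ℝ} (ha : ∀ n, a (n + 2) ≤ a n / 2) (n i : ℕ) :
    a (n + 2 * i) ≤ a n / 2 ^ i := by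
  induction i with
  | zero => simp
  | succ i ih =>
    calc a (n + 2 * (i + 1)) = a (n + 2 * i + 2) := by ring_nf
      _ ≤ a (n + 2 * i) / 2 := ha _
      _ ≤ a n / 2 ^ i / 2 := by gcongr
      _ = a n / 2 ^ (i + 1) := by ring

theorem tsum_ofReal_le_of_le_half {a : ℕ → ℝ} (ha0 : ∀ n, 0 ≤ a n)
    (ha : ∀ n, a (n + 2) ≤ a n / 2) (M : ℕ) :
    ∑' j, ENNReal.ofReal (a (M + j)) ≤ ENNReal.ofReal (2 * (a M + a (M + 1))) := by
  have hgeom (n : ℕ) : ∑' i : ℕ, ENNReal.ofReal (a (n + 2 * i)) ≤ ENNReal.ofReal (2 * a n) := by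
    calc ∑' i : ℕ, ENNReal.ofReal (a (n + 2 * i))
        ≤ ∑' i : ℕ, ENNReal.ofReal (a n) * 2⁻¹ ^ i := ENNReal.tsum_le_tsum fun i => by
          rw [← ENNReal.inv_pow, ← div_eq_mul_inv, ← ENNReal.ofReal_ofNat 2,
            ← ENNReal.ofReal_pow zero_le_two, ← ENNReal.ofReal_div_of_pos (by positivity)]
          exact ENNReal.ofReal_le_ofReal (le_div_two_pow_of_le_half ha n i)
      _ = ENNReal.ofReal (2 * a n) := by
          rw [ENNReal.tsum_mul_left, ENNReal.tsum_geometric, ENNReal.one_sub_inv_two, inv_inv,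
            ENNReal.ofReal_mul zero_le_two, ENNReal.ofReal_ofNat, mul_comm]
  rw [← tsum_even_add_odd ENNReal.summable ENNReal.summable, mul_add,
    ENNReal.ofReal_add (by linarith [ha0 M]) (by linarith [ha0 (M + 1)])]
  refine add_le_add (hgeom M) ((tsum_congr fun i => ?_).trans_le (hgeom (M + 1)))
  rw [← add_assoc, add_right_comm]

theorem tsum_ofReal_abs_sub_le {a b : ℕ → ℝ} {ε : ℝ} (ha : ∀ n, 0 ≤ a n) (hb : ∀ n, 0 ≤ b n)
    (hab : ∀ n, |a n - b n| ≤ ε) (M : ℕ) :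
    ∑' n, ENNReal.ofReal |a n - b n|
      ≤ M * ENNReal.ofReal ε + ∑' j, (ENNReal.ofReal (a (M + j)) + ENNReal.ofReal (b (M + j))) := by
  rw [← ENNReal.summable.sum_add_tsum_nat_add' (k := M)]
  refine add_le_add ?_ (ENNReal.tsum_le_tsum fun j => ?_)
  · simpa using Finset.sum_le_card_nsmul (Finset.range M) _ _
      fun n _ => ENNReal.ofReal_le_ofReal (hab n)
  · rw [← ENNReal.ofReal_add (ha _) (hb _), add_comm j]
    refine ENNReal.ofReal_le_ofReal ((abs_sub _ _).trans ?_)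
    rw [abs_of_nonneg (ha _), abs_of_nonneg (hb _)]

namespace IsCenteredLogConcavePMF

variable {p q : ℤ → ℝ}

theorem tsum_ofReal_upperTail_le (hp : IsCenteredLogConcavePMF p) (N : ℕ) :
    ∑' j : ℕ, ENNReal.ofReal (upperTail p (2 * N + j + 1)) ≤ ENNReal.ofReal (2 / 2 ^ N) := by
  have ha (n : ℕ) : upperTail p ((n + 2 : ℕ) + 1) ≤ upperTail p (n + 1) / 2 := by
    have h := hp.upperTail_add_two_le (n + 1)
    push_cast at h ⊢
    rwa [add_right_comm]
  have h1 := hp.natCast_mul_upperTail_le 1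
  have h2 := hp.natCast_mul_upperTail_le 2
  push_cast at h1 h2
  have hN := le_div_two_pow_of_le_half (a := fun n : ℕ => upperTail p (n + 1)) ha 0 N
  have hN' := le_div_two_pow_of_le_half (a := fun n : ℕ => upperTail p (n + 1)) ha 1 N
  push_cast at hN hN'
  rw [zero_add] at hN
  rw [show (1 : ℤ) + 2 * N + 1 = 2 * N + 1 + 1 by ring] at hN'
  have hbound : 2 * (upperTail p (2 * N + 1) + upperTail p (2 * N + 1 + 1)) ≤ 2 / 2 ^ N := by
    rw [le_div_iff₀ (by positivity)] at hN hN' ⊢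
    nlinarith
  calc ∑' j : ℕ, ENNReal.ofReal (upperTail p (2 * N + j + 1))
      = ∑' j : ℕ, ENNReal.ofReal (upperTail p ((2 * N + j : ℕ) + 1)) := by push_cast; rfl
    _ ≤ ENNReal.ofReal (2 * (upperTail p ((2 * N : ℕ) + 1) + upperTail p ((2 * N + 1 : ℕ) + 1))) :=
        tsum_ofReal_le_of_le_half (a := fun n : ℕ => upperTail p (n + 1))
          (fun n => upperTail_nonneg hp.nonneg _) ha _
    _ ≤ ENNReal.ofReal (2 / 2 ^ N) := ENNReal.ofReal_le_ofReal (by push_cast; exact hbound)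

theorem tsum_ofReal_abs_upperTail_sub_le (hp : IsCenteredLogConcavePMF p)
    (hq : IsCenteredLogConcavePMF q) {ε : ℝ} (hε : ∀ m, |upperTail p m - upperTail q m| ≤ ε)
    (N : ℕ) :
    ∑' n : ℕ, ENNReal.ofReal |upperTail p (n + 1) - upperTail q (n + 1)|
      ≤ ENNReal.ofReal (2 * N * ε + 4 / 2 ^ N) := by
  have hε0 : 0 ≤ ε := (abs_nonneg _).trans (hε 0)
  calc ∑' n : ℕ, ENNReal.ofReal |upperTail p (n + 1) - upperTail q (n + 1)|
      ≤ (2 * N : ℕ) * ENNReal.ofReal ε + ∑' j : ℕ,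
          (ENNReal.ofReal (upperTail p (2 * N + j + 1))
            + ENNReal.ofReal (upperTail q (2 * N + j + 1))) := by
        have h := tsum_ofReal_abs_sub_le (a := fun n : ℕ => upperTail p (n + 1))
          (b := fun n : ℕ => upperTail q (n + 1)) (fun n => upperTail_nonneg hp.nonneg _)
          (fun n => upperTail_nonneg hq.nonneg _) (fun n => hε _) (2 * N)
        push_cast at h ⊢
        exact h
    _ ≤ (2 * N : ℕ) * ENNReal.ofReal ε
          + (ENNReal.ofReal (2 / 2 ^ N) + ENNReal.ofReal (2 / 2 ^ N)) := by
        rw [ENNReal.tsum_add]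
        gcongr
        exacts [hp.tsum_ofReal_upperTail_le N, hq.tsum_ofReal_upperTail_le N]
    _ = ENNReal.ofReal (2 * N * ε + 4 / 2 ^ N) := by
        rw [← ENNReal.ofReal_add (by positivity) (by positivity), ← ENNReal.ofReal_natCast,
          ← ENNReal.ofReal_mul (by positivity), ← ENNReal.ofReal_add (by positivity)
          (by positivity)]
        congr 1
        push_cast
        ring

end IsCenteredLogConcavePMF

section MeasureInt

variable (μ : Measure ℤ)

noncomputable def intCDF (k : ℤ) : ℝ := (μ (Iic k)).toReal

theorem measure_range_eq_tsum {e : ℕ → ℤ} (he : Function.Injective e) :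
    μ (range e) = ∑' j, μ {e j} := by
  rw [← iUnion_singleton_eq_range, measure_iUnion (fun i j hij => disjoint_singleton.2 (he.ne hij))
    fun _ => measurableSet_singleton _]

theorem toReal_measure_Ici [IsFiniteMeasure μ] (m : ℤ) :
    (μ (Ici m)).toReal = upperTail (fun k => (μ {k}).toReal) m := by
  have hrange : Ici m = range fun j : ℕ => m + j := by
    ext k
    refine ⟨fun hk => ⟨(k - m).toNat, show m + _ = k by simp at hk; omega⟩, ?_⟩
    rintro ⟨j, rfl⟩
    simp
  rw [hrange, measure_range_eq_tsum μ (e := fun j : ℕ => m + j) fun _ _ h => by simpa using h,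
    ENNReal.tsum_toReal_eq fun _ => measure_ne_top _ _]
  rfl

theorem toReal_measure_Iic [IsFiniteMeasure μ] (m : ℤ) :
    (μ (Iic m)).toReal = upperTail (fun k => (μ {-k}).toReal) (-m) := by
  have hrange : Iic m = range fun j : ℕ => -(-m + j) := by
    ext k
    refine ⟨fun hk => ⟨(m - k).toNat, show -(-m + _) = k by simp at hk; omega⟩, ?_⟩
    rintro ⟨j, rfl⟩
    simp
  rw [hrange, measure_range_eq_tsum μ (e := fun j : ℕ => -(-m + j)) fun _ _ h => by simpa using h,
    ENNReal.tsum_toReal_eq fun _ => measure_ne_top _ _]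
  rfl

theorem intCDF_eq_one_sub [IsProbabilityMeasure μ] (k : ℤ) :
    intCDF μ k = 1 - (μ (Ici (k + 1))).toReal := by
  have hcompl : Iic k = (Ici (k + 1))ᶜ := by
    ext
    simp only [mem_Iic, mem_compl_iff, mem_Ici, not_le]
    omega
  rw [intCDF, hcompl]
  exact probReal_compl_eq_one_sub measurableSet_Ici

theorem hasSum_toReal_measure_singleton [IsProbabilityMeasure μ] :
    HasSum (fun k => (μ {k}).toReal) 1 := by
  have h : ∑' k, μ {k} = 1 := by
    simpa using μ.tsum_indicator_apply_singleton univ MeasurableSet.univ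
  have hs := ENNReal.hasSum_toReal (h ▸ ENNReal.one_ne_top)
  rwa [← ENNReal.tsum_toReal_eq fun _ => measure_ne_top _ _, h, ENNReal.toReal_one] at hs

end MeasureInt

theorem tsum_ofReal_abs_intCDF_sub_le (μ ν : Measure ℤ) [IsProbabilityMeasure μ]
    [IsProbabilityMeasure ν] (hμ : IsCenteredLogConcavePMF fun k => (μ {k}).toReal)
    (hν : IsCenteredLogConcavePMF fun k => (ν {k}).toReal) {ε : ℝ}
    (hε : ∀ A, |(μ A).toReal - (ν A).toReal| ≤ ε) (N : ℕ) :
    ∑' k, ENNReal.ofReal |intCDF μ k - intCDF ν k| ≤ ENNReal.ofReal (4 * N * ε + 8 / 2 ^ N) := by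
  have hε0 : 0 ≤ ε := (abs_nonneg _).trans (hε ∅)
  have hright := hμ.tsum_ofReal_abs_upperTail_sub_le hν
    (fun m => by simpa only [toReal_measure_Ici] using hε (Ici m)) N
  have hleft := hμ.comp_neg.tsum_ofReal_abs_upperTail_sub_le hν.comp_neg
    (fun m => by simpa only [toReal_measure_Iic, neg_neg] using hε (Iic (-m))) N
  rw [tsum_of_nat_of_neg_add_one ENNReal.summable ENNReal.summable]
  calc _ = ∑' n : ℕ, ENNReal.ofReal |upperTail (fun k => (μ {k}).toReal) (n + 1)
            - upperTail (fun k => (ν {k}).toReal) (n + 1)|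
          + ∑' n : ℕ, ENNReal.ofReal |upperTail (fun k => (μ {-k}).toReal) (n + 1)
            - upperTail (fun k => (ν {-k}).toReal) (n + 1)| := by
        congr 1 <;> refine tsum_congr fun n => ?_
        · rw [intCDF_eq_one_sub, intCDF_eq_one_sub, toReal_measure_Ici, toReal_measure_Ici,
            abs_sub_comm]
          ring_nf
        · rw [intCDF, intCDF, toReal_measure_Iic, toReal_measure_Iic, neg_neg]
    _ ≤ ENNReal.ofReal (2 * N * ε + 4 / 2 ^ N) + ENNReal.ofReal (2 * N * ε + 4 / 2 ^ N) :=
        add_le_add hright hleft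
    _ = ENNReal.ofReal (4 * N * ε + 8 / 2 ^ N) := by
        rw [← ENNReal.ofReal_add (by positivity) (by positivity)]
        ring_nf

theorem Set.mem_uIoc_iff_not_iff {α : Type*} [LinearOrder α] {a b c : α} :
    a ∈ Ι b c ↔ ¬(a ≤ b ↔ a ≤ c) := by
  rw [mem_uIoc, ← not_le, ← not_le]
  tauto

theorem ofReal_abs_intCast_sub (a b : ℤ) :
    ENNReal.ofReal |(a : ℝ) - b| = ∑' k : ℤ, {k | ¬(a ≤ k ↔ b ≤ k)}.indicator 1 k := by
  have hs : {k | ¬(a ≤ k ↔ b ≤ k)} = (Finset.Ico (min a b) (max a b) : Set ℤ) := by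
    ext k
    simp only [mem_ofPred_eq, Finset.coe_Ico, mem_Ico, min_le_iff, lt_max_iff]
    omega
  rw [hs, ← tsum_subtype, Pi.one_def, ENNReal.tsum_set_one, encard_coe_eq_coe_finsetCard,
    Int.card_Ico, ENat.toENNReal_coe, ← ENNReal.ofReal_natCast, ← Int.cast_natCast,
    Int.toNat_of_nonneg (sub_nonneg.2 min_le_max), ← max_sub_min_eq_abs']
  push_cast
  rfl

theorem volume_restrict_Ioo_of_subset {s : Set ℝ} (hs : s ⊆ Ioc 0 1) :
    volume.restrict (Ioo 0 1) s = volume s := by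
  rw [Measure.restrict_congr_set Ioo_ae_eq_Ioc, Measure.restrict_apply' measurableSet_Ioc,
    inter_eq_left.2 hs]

section Quantile

variable (μ : Measure ℤ)

theorem intCDF_nonneg (k : ℤ) : 0 ≤ intCDF μ k := ENNReal.toReal_nonneg

theorem intCDF_le_one [IsProbabilityMeasure μ] (k : ℤ) : intCDF μ k ≤ 1 := measureReal_le_one

theorem monotone_intCDF [IsFiniteMeasure μ] : Monotone (intCDF μ) := fun _ _ h =>
  ENNReal.toReal_mono (measure_ne_top _ _) (measure_mono (Iic_subset_Iic.2 h))

theorem tendsto_intCDF_atBot [IsFiniteMeasure μ] : Tendsto (intCDF μ) atBot (𝓝 0) := by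
  have h := tendsto_measure_iInter_atBot (μ := μ) (fun _ => measurableSet_Iic.nullMeasurableSet)
    monotone_Iic ⟨0, measure_ne_top _ _⟩
  have hempty : ⋂ k : ℤ, Iic k = ∅ := iInter_eq_empty_iff.2 fun k => ⟨k - 1, by simp⟩
  rw [hempty, measure_empty] at h
  exact (ENNReal.tendsto_toReal ENNReal.zero_ne_top).comp h

theorem tendsto_intCDF_atTop [IsProbabilityMeasure μ] : Tendsto (intCDF μ) atTop (𝓝 1) := by
  have h := tendsto_measure_Iic_atTop μ
  rw [measure_univ] at h
  have h' := (ENNReal.tendsto_toReal ENNReal.one_ne_top).comp h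
  rwa [ENNReal.toReal_one] at h'

noncomputable def intQuantile (t : ℝ) : ℤ :=
  if t ∈ Ioo 0 1 then sInf {k | t ≤ intCDF μ k} else 0

variable [IsProbabilityMeasure μ]

theorem intQuantile_le_iff {t : ℝ} (ht : t ∈ Ioo 0 1) (k : ℤ) :
    intQuantile μ t ≤ k ↔ t ≤ intCDF μ k := by
  obtain ⟨a, ha⟩ := ((tendsto_intCDF_atBot μ).eventually (gt_mem_nhds ht.1)).exists
  obtain ⟨b, hb⟩ := ((tendsto_intCDF_atTop μ).eventually (lt_mem_nhds ht.2)).exists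
  have hbdd : BddBelow {k | t ≤ intCDF μ k} :=
    ⟨a, fun j hj => le_of_not_gt fun hja => (hj.trans (monotone_intCDF μ hja.le)).not_gt ha⟩
  rw [intQuantile, if_pos ht]
  exact ⟨fun h => (Int.csInf_mem ⟨b, hb.le⟩ hbdd).trans (monotone_intCDF μ h),
    fun h => csInf_le hbdd h⟩

theorem measurable_intQuantile : Measurable (intQuantile μ) := by
  refine measurable_of_Iic fun k => ?_
  have hpre : intQuantile μ ⁻¹' Iic k
      = Ioo 0 1 ∩ Iic (intCDF μ k) ∪ (Ioo 0 1)ᶜ ∩ {_t | 0 ≤ k} := by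
    ext t
    by_cases ht : t ∈ Ioo 0 1
    · simp [ht, intQuantile_le_iff μ ht]
    · simp [ht, intQuantile]
  rw [hpre]
  exact (measurableSet_Ioo.inter measurableSet_Iic).union
    (measurableSet_Ioo.compl.inter (MeasurableSet.const _))

theorem map_intQuantile : (volume.restrict (Ioo (0 : ℝ) 1)).map (intQuantile μ) = μ := by
  have : IsFiniteMeasure (volume.restrict (Ioo (0 : ℝ) 1)) := ⟨by simp⟩
  refine Measure.ext_of_Iic _ _ fun k => ?_
  have hpre : intQuantile μ ⁻¹' Iic k ∩ Ioo 0 1 = Ioc 0 (intCDF μ k) ∩ Ioo 0 1 := by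
    ext t
    by_cases ht : t ∈ Ioo 0 1
    · simp [ht, intQuantile_le_iff μ ht, ht.1]
    · simp [ht]
  rw [Measure.map_apply (measurable_intQuantile μ) measurableSet_Iic,
    Measure.restrict_apply' measurableSet_Ioo, hpre, ← Measure.restrict_apply' measurableSet_Ioo,
    volume_restrict_Ioo_of_subset (Ioc_subset_Ioc_right (intCDF_le_one μ k)), Real.volume_Ioc,
    sub_zero, intCDF, ENNReal.ofReal_toReal (measure_ne_top _ _)]

end Quantile

section Coupling

variable (μ ν : Measure ℤ) [IsProbabilityMeasure μ] [IsProbabilityMeasure ν]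

noncomputable def quantileCoupling : Measure (ℤ × ℤ) :=
  (volume.restrict (Ioo (0 : ℝ) 1)).map fun t => (intQuantile μ t, intQuantile ν t)

theorem measurable_intQuantile_prod :
    Measurable fun t => (intQuantile μ t, intQuantile ν t) :=
  (measurable_intQuantile μ).prodMk (measurable_intQuantile ν)

theorem map_fst_quantileCoupling : (quantileCoupling μ ν).map Prod.fst = μ := by
  rw [quantileCoupling, Measure.map_map measurable_fst (measurable_intQuantile_prod μ ν)]
  exact map_intQuantile μ

theorem map_snd_quantileCoupling : (quantileCoupling μ ν).map Prod.snd = ν := by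
  rw [quantileCoupling, Measure.map_map measurable_snd (measurable_intQuantile_prod μ ν)]
  exact map_intQuantile ν

theorem lintegral_quantileCoupling :
    ∫⁻ x, ENNReal.ofReal |(x.1 : ℝ) - x.2| ∂quantileCoupling μ ν
      = ∑' k, ENNReal.ofReal |intCDF μ k - intCDF ν k| := by
  rw [quantileCoupling, lintegral_map (measurable_of_countable _) (measurable_intQuantile_prod μ ν)]
  simp_rw [ofReal_abs_intCast_sub]
  rw [lintegral_tsum (f := fun k t =>
      {j | ¬(intQuantile μ t ≤ j ↔ intQuantile ν t ≤ j)}.indicator (1 : ℤ → ℝ≥0∞) k)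
    fun k => ((measurable_of_countable fun x : ℤ × ℤ =>
      {j | ¬(x.1 ≤ j ↔ x.2 ≤ j)}.indicator (1 : ℤ → ℝ≥0∞) k).comp
        (measurable_intQuantile_prod μ ν)).aemeasurable]
  refine tsum_congr fun k => ?_
  calc ∫⁻ t, {k | ¬(intQuantile μ t ≤ k ↔ intQuantile ν t ≤ k)}.indicator 1 k
        ∂volume.restrict (Ioo 0 1)
      = ∫⁻ t, (Ι (intCDF μ k) (intCDF ν k)).indicator 1 t ∂volume.restrict (Ioo 0 1) := by
        refine lintegral_congr_ae ((ae_restrict_mem measurableSet_Ioo).mono fun t ht => ?_)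
        have hmem : k ∈ {j | ¬(intQuantile μ t ≤ j ↔ intQuantile ν t ≤ j)}
            ↔ t ∈ Ι (intCDF μ k) (intCDF ν k) := by
          rw [mem_ofPred_eq, mem_uIoc_iff_not_iff, intQuantile_le_iff μ ht, intQuantile_le_iff ν ht]
        by_cases h : t ∈ Ι (intCDF μ k) (intCDF ν k)
        · rw [indicator_of_mem h]
          exact indicator_of_mem (hmem.2 h) _
        · rw [indicator_of_notMem h]
          exact indicator_of_notMem (mt hmem.1 h) _
    _ = ENNReal.ofReal |intCDF μ k - intCDF ν k| := by
        have hsub : Ι (intCDF μ k) (intCDF ν k) ⊆ Ioc 0 1 :=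
          Ioc_subset_Ioc (le_min (intCDF_nonneg μ k) (intCDF_nonneg ν k))
            (max_le (intCDF_le_one μ k) (intCDF_le_one ν k))
        rw [lintegral_indicator_one measurableSet_uIoc, volume_restrict_Ioo_of_subset hsub,
          Real.volume_uIoc, abs_sub_comm]

theorem W1_le_of_tsum_le {x : ℝ} (hx : 0 ≤ x)
    (h : ∑' k, ENNReal.ofReal |intCDF μ k - intCDF ν k| ≤ ENNReal.ofReal x) : W1 μ ν ≤ x := by
  refine ENNReal.toReal_le_of_le_ofReal hx ((iInf₂_le (quantileCoupling μ ν)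
    ⟨map_fst_quantileCoupling μ ν, map_snd_quantileCoupling μ ν⟩).trans ?_)
  rwa [lintegral_quantileCoupling]

end Coupling

theorem Int.thickening_subset {ε : ℝ} (hε : ε ≤ 1) (A : Set ℤ) : Metric.thickening ε A ⊆ A := by
  intro x hx
  obtain ⟨z, hz, hd⟩ := Metric.mem_thickening_iff.1 hx
  by_contra hxA
  have hne : x ≠ z := by
    rintro rfl
    exact hxA hz
  exact (Int.pairwise_one_le_dist hne).not_gt (hd.trans_le hε)

theorem le_thickening_one {μ : Measure ℤ} [IsProbabilityMeasure μ] (ν : Measure ℤ) (A : Set ℤ) :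
    μ A ≤ ν (Metric.thickening 1 A) + ENNReal.ofReal 1 :=
  prob_le_one.trans (ENNReal.ofReal_one ▸ le_add_self)

section LevyProkhorov

variable {μ ν : Measure ℤ} [IsProbabilityMeasure μ] [IsProbabilityMeasure ν]

theorem abs_toReal_sub_le_of_le_thickening {ε : ℝ} (hε : 0 < ε)
    (h : ∀ A, μ A ≤ ν (Metric.thickening ε A) + ENNReal.ofReal ε) (A : Set ℤ) :
    |(μ A).toReal - (ν A).toReal| ≤ ε := by
  rcases le_or_gt ε 1 with hε1 | hε1
  · have key (B : Set ℤ) : (μ B).toReal ≤ (ν B).toReal + ε := by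
      have hB := (h B).trans (add_le_add_left (measure_mono (Int.thickening_subset hε1 B)) _)
      rw [← ENNReal.toReal_ofReal hε.le, ← ENNReal.toReal_add (measure_ne_top _ _)
        ENNReal.ofReal_ne_top]
      exact ENNReal.toReal_mono (by finiteness) hB
    have hcompl (ρ : Measure ℤ) [IsProbabilityMeasure ρ] : (ρ Aᶜ).toReal = 1 - (ρ A).toReal :=
      probReal_compl_eq_one_sub .of_discrete
    have := key Aᶜ
    rw [hcompl μ, hcompl ν] at this
    rw [abs_le]
    constructor <;> linarith [key A]
  · exact (abs_sub_le_of_le_of_le ENNReal.toReal_nonneg measureReal_le_one ENNReal.toReal_nonneg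
      measureReal_le_one).trans (by linarith)

end LevyProkhorov

section dLP

variable {μ : Measure ℤ} [IsProbabilityMeasure μ] (ν : Measure ℤ)

theorem dLP_le_one : dLP μ ν ≤ 1 :=
  csInf_le ⟨0, fun _ h => h.1.le⟩ ⟨one_pos, le_thickening_one ν⟩

variable {ν} in
theorem le_thickening_of_dLP_lt {ε : ℝ} (h : dLP μ ν < ε) :
    0 < ε ∧ ∀ A, μ A ≤ ν (Metric.thickening ε A) + ENNReal.ofReal ε := by
  unfold dLP at h
  obtain ⟨δ, ⟨hδ, hδA⟩, hδε⟩ := exists_lt_of_csInf_lt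
    (by exact ⟨1, one_pos, le_thickening_one ν⟩) h
  exact ⟨hδ.trans hδε, fun A => (hδA A).trans (add_le_add
    (measure_mono (Metric.thickening_mono hδε.le A)) (ENNReal.ofReal_le_ofReal hδε.le))⟩

end dLP

open Real in
theorem exists_nat_le_mul_log {ε : ℝ} (hε0 : 0 < ε) (hε2 : ε ≤ 2) :
    ∃ N : ℕ, 4 * N * ε + 8 / 2 ^ N ≤ 12 * ε * log (4 * exp 1 / ε) := by
  have hlog : log (4 * exp 1 / ε) = 2 * log 2 + 1 - log ε := by
    rw [log_div (by positivity) hε0.ne', log_mul (by norm_num) (exp_pos 1).ne', log_exp,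
      show (4 : ℝ) = 2 ^ 2 by norm_num, log_pow]
    push_cast
    ring
  have hlog2 := log_two_gt_d9
  rw [hlog]
  rcases le_or_gt ε 1 with hε1 | hε1
  · -- `N = ⌊log₂ (1 / ε)⌋ + 1`
    obtain ⟨n, hn, hn'⟩ := exists_nat_pow_near (one_le_one_div hε0 hε1) one_lt_two
    refine ⟨n + 1, ?_⟩
    have h8 : 8 / (2 : ℝ) ^ (n + 1) ≤ 8 * ε := by
      rw [div_le_iff₀ (by positivity)]
      rw [div_lt_iff₀ hε0] at hn'
      linarith
    have hL : n * log 2 ≤ -log ε := by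
      rw [← log_pow, ← log_inv, ← one_div]
      exact log_le_log (by positivity) hn
    have key : 4 * ((n : ℝ) + 1) + 8 ≤ 12 * (2 * log 2 + 1 - log ε) := by
      nlinarith [mul_le_mul_of_nonneg_left hlog2.le (Nat.cast_nonneg n : (0 : ℝ) ≤ n)]
    push_cast
    nlinarith [mul_le_mul_of_nonneg_right key hε0.le]
  · refine ⟨0, ?_⟩
    have := log_le_log hε0 hε2
    norm_num
    nlinarith

theorem continuous_mul_log_const_div {c : ℝ} (hc : c ≠ 0) :
    Continuous fun x => x * Real.log (c / x) := by
  have h : (fun x => x * Real.log (c / x)) = fun x => x * Real.log c - x * Real.log x := by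
    funext x
    rcases eq_or_ne x 0 with rfl | hx
    · simp
    · rw [Real.log_div hc hx]
      ring
  rw [h]
  exact (continuous_id.mul continuous_const).sub Real.continuous_mul_log

theorem W1_le_of_le_thickening (μ ν : Measure ℤ) [IsProbabilityMeasure μ] [IsProbabilityMeasure ν]
    (hμ : IsCenteredLogConcavePMF fun k => (μ {k}).toReal)
    (hν : IsCenteredLogConcavePMF fun k => (ν {k}).toReal) {ε : ℝ} (hε0 : 0 < ε) (hε2 : ε ≤ 2)
    (h : ∀ A, μ A ≤ ν (Metric.thickening ε A) + ENNReal.ofReal ε) :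
    W1 μ ν ≤ 12 * ε * Real.log (4 * Real.exp 1 / ε) := by
  obtain ⟨N, hN⟩ := exists_nat_le_mul_log hε0 hε2
  refine W1_le_of_tsum_le μ ν ((by positivity : (0 : ℝ) ≤ 4 * N * ε + 8 / 2 ^ N).trans hN) ?_
  exact (tsum_ofReal_abs_intCDF_sub_le μ ν hμ hν (abs_toReal_sub_le_of_le_thickening hε0 h) N).trans
    (ENNReal.ofReal_le_ofReal hN)

/-- For centered log-concave probability measures `μ, ν` on `ℤ` with first absolute
moment at most 1, `W₁(μ,ν) ≤ 12·d_LP(μ,ν)·log(4e/d_LP(μ,ν))`. -/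
theorem W1_le_dLP_universal
    (μ ν : Measure ℤ) [IsProbabilityMeasure μ] [IsProbabilityMeasure ν]
    (hμlc : IsLogConcavePMF (fun k => (μ {k}).toReal))
    (hνlc : IsLogConcavePMF (fun k => (ν {k}).toReal))
    (hμc : (∑' k : ℤ, (k : ℝ) * (μ {k}).toReal) = 0)
    (hνc : (∑' k : ℤ, (k : ℝ) * (ν {k}).toReal) = 0)
    (hμm : (∑' k : ℤ, |(k : ℝ)| * (μ {k}).toReal) ≤ 1)
    (hνm : (∑' k : ℤ, |(k : ℝ)| * (ν {k}).toReal) ≤ 1) :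
    W1 μ ν ≤ 12 * dLP μ ν * Real.log (4 * Real.exp 1 / dLP μ ν) := by
  have hμ : IsCenteredLogConcavePMF fun k => (μ {k}).toReal :=
    ⟨fun _ => ENNReal.toReal_nonneg, hμlc, hasSum_toReal_measure_singleton μ, hμc, hμm⟩
  have hν : IsCenteredLogConcavePMF fun k => (ν {k}).toReal :=
    ⟨fun _ => ENNReal.toReal_nonneg, hνlc, hasSum_toReal_measure_singleton ν, hνc, hνm⟩
  -- the bound is continuous in `ε`, also at `ε = 0`, so it passes to the infimum `dLP μ ν`
  have hlim : Tendsto (fun ε => 12 * ε * Real.log (4 * Real.exp 1 / ε)) (𝓝[>] dLP μ ν)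
      (𝓝 (12 * dLP μ ν * Real.log (4 * Real.exp 1 / dLP μ ν))) := by
    simp_rw [mul_assoc]
    exact ((continuous_mul_log_const_div (by positivity)).const_mul 12).continuousWithinAt
  refine ge_of_tendsto hlim ?_
  filter_upwards [Ioo_mem_nhdsGT ((dLP_le_one ν).trans_lt one_lt_two)] with ε hε
  obtain ⟨hε0, h⟩ := le_thickening_of_dLP_lt hε.1
  exact W1_le_of_le_thickening μ ν hμ hν hε0 hε.2.le h
end
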